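/- Let ω > 0, x, e ∈ ℝ³ and set v = F_ω(x) + e. Assume d_r(x) ≥ 4·d_r(e)/ω and let s ≥ 4‖e‖/(ω² d_r(x)). Then ‖v − F_ω(x + s v)‖ ≥ s ω² d_r(x)/2. -/

import Mathlib

noncomputable def vec3 (a b c : ℝ) : EuclideanSpace ℝ (Fin 3) := WithLp.toLp 2 ![a, b, c]

noncomputable def Frot (ω : ℝ) (y : EuclideanSpace ℝ (Fin 3)) : EuclideanSpace ℝ (Fin 3) :=
  vec3 (-ω * y 1) (ω * y 0) 0

noncomputable def dr (x : EuclideanSpace ℝ (Fin 3)) : ℝ :=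
  Real.sqrt (x 0 ^ 2 + x 1 ^ 2)

/-!
Since `F_ω` is linear, `v - F_ω (x + s v) = e - s F_ω (F_ω x) - s F_ω e`. As
`‖F_ω y‖ = dr (F_ω y) = |ω| dr y`, the middle term has norm `s ω² dr x`, and the hypotheses bound
each of the other two terms by a quarter of it.
-/

lemma Real.sqrt_sq_mul (a t : ℝ) : Real.sqrt (a ^ 2 * t) = |a| * Real.sqrt t := by
  rw [Real.sqrt_mul (sq_nonneg a), Real.sqrt_sq_eq_abs]

lemma norm_vec3 (a b c : ℝ) : ‖vec3 a b c‖ = Real.sqrt (a ^ 2 + b ^ 2 + c ^ 2) := by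
  simp [EuclideanSpace.norm_eq, vec3, Fin.sum_univ_three]

lemma dr_nonneg (x : EuclideanSpace ℝ (Fin 3)) : 0 ≤ dr x := Real.sqrt_nonneg _

section Frot

variable (ω : ℝ)

noncomputable def Frot.linearMap : EuclideanSpace ℝ (Fin 3) →ₗ[ℝ] EuclideanSpace ℝ (Fin 3) where
  toFun := Frot ω
  map_add' y z := by ext i; fin_cases i <;> simp [Frot, vec3] <;> ring
  map_smul' c y := by ext i; fin_cases i <;> simp [Frot, vec3] <;> ring

lemma Frot_add (y z : EuclideanSpace ℝ (Fin 3)) : Frot ω (y + z) = Frot ω y + Frot ω z :=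
  map_add (Frot.linearMap ω) y z

lemma Frot_smul (c : ℝ) (y : EuclideanSpace ℝ (Fin 3)) : Frot ω (c • y) = c • Frot ω y :=
  map_smul (Frot.linearMap ω) c y

lemma norm_Frot (y : EuclideanSpace ℝ (Fin 3)) : ‖Frot ω y‖ = |ω| * dr y := by
  rw [Frot, norm_vec3, dr, ← Real.sqrt_sq_mul]
  congr 1
  ring

lemma dr_Frot (y : EuclideanSpace ℝ (Fin 3)) : dr (Frot ω y) = |ω| * dr y := by
  simp only [dr, ← Real.sqrt_sq_mul]
  congr 1
  simp [Frot, vec3]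
  ring

lemma norm_Frot_Frot (y : EuclideanSpace ℝ (Fin 3)) : ‖Frot ω (Frot ω y)‖ = ω ^ 2 * dr y := by
  rw [norm_Frot, dr_Frot, ← mul_assoc, ← abs_mul, ← sq, abs_sq]

lemma sub_Frot_add_smul (x e : EuclideanSpace ℝ (Fin 3)) (s : ℝ) :
    Frot ω x + e - Frot ω (x + s • (Frot ω x + e)) =
      e - s • Frot ω (Frot ω x) - s • Frot ω e := by
  rw [Frot_add, Frot_smul, Frot_add]
  module

lemma norm_sub_Frot_add_smul_ge (x e : EuclideanSpace ℝ (Fin 3)) {s : ℝ} (hs : 0 ≤ s) :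
    s * ω ^ 2 * dr x - ‖e‖ - s * |ω| * dr e ≤
      ‖Frot ω x + e - Frot ω (x + s • (Frot ω x + e))‖ := by
  have hFFx : ‖s • Frot ω (Frot ω x)‖ = s * ω ^ 2 * dr x := by
    rw [norm_smul, norm_Frot_Frot, Real.norm_of_nonneg hs, mul_assoc]
  have hFe : ‖s • Frot ω e‖ = s * |ω| * dr e := by
    rw [norm_smul, norm_Frot, Real.norm_of_nonneg hs, mul_assoc]
  rw [sub_Frot_add_smul, ← hFFx, ← hFe]
  set a := s • Frot ω (Frot ω x)
  linarith [norm_sub_norm_le (e - a) (s • Frot ω e), norm_sub_norm_le a e, norm_sub_rev a e]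

end Frot

theorem stmt_8 (ω : ℝ) (hω : 0 < ω) (x e : EuclideanSpace ℝ (Fin 3))
    (v : EuclideanSpace ℝ (Fin 3)) (hv : v = Frot ω x + e)
    (hx : dr x ≥ 4 * dr e / ω) (s : ℝ) (hs : s ≥ 4 * ‖e‖ / (ω ^ 2 * dr x)) :
    ‖v - Frot ω (x + s • v)‖ ≥ s * ω ^ 2 * dr x / 2 := by
  subst hv
  have hs₀ : 0 ≤ s := le_trans (div_nonneg (by positivity) (by positivity [dr_nonneg x])) hs
  rcases (dr_nonneg x).eq_or_lt with hx₀ | hx₀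
  · rw [← hx₀, mul_zero, zero_div]
    exact norm_nonneg _
  have he : 4 * ‖e‖ ≤ s * ω ^ 2 * dr x := by
    rw [ge_iff_le, div_le_iff₀ (by positivity)] at hs
    linarith
  have hdre : 4 * (ω * dr e) ≤ ω ^ 2 * dr x := by
    rw [ge_iff_le, div_le_iff₀ hω] at hx
    nlinarith
  have hsdre : 4 * (s * |ω| * dr e) ≤ s * ω ^ 2 * dr x := by
    rw [abs_of_pos hω]
    nlinarith
  linarith [norm_sub_Frot_add_smul_ge ω x e hs₀]
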